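/- arXiv:1605.02336 — 2 statements merged into one kernel-verified Lean document; each statement's English description precedes it below -/
import Mathlib

section
/- Let n ∈ ℝ, k_n = n − 1, k₀ ∈ ℝ. On Ω = {r > 0}, the two quadratic integrals J₁₁ = P₁² + 2(k₀/r^{2k_n}) cos²(k_n φ) and J₂₂ = P₂² + 2(k₀/r^{2k_n}) sin²(k_n φ) of the Hamiltonian H_na = T_n + k₀/r^{2k_n} are in involution: {J₁₁, J₂₂} = 0 at every point of Ω. -/
open Real

/-- Canonical Poisson bracket on the phase space Ω ⊆ ℝ⁴ with coordinates (r, φ, p_r, p_φ):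
{F,G} = F_r G_{p_r} − F_{p_r} G_r + F_φ G_{p_φ} − F_{p_φ} G_φ. -/
noncomputable def pb (F G : ℝ → ℝ → ℝ → ℝ → ℝ) (r φ pr pφ : ℝ) : ℝ :=
  (deriv (fun x => F x φ pr pφ) r) * (deriv (fun x => G r φ x pφ) pr)
    - (deriv (fun x => F r φ x pφ) pr) * (deriv (fun x => G x φ pr pφ) r)
    + (deriv (fun x => F r x pr pφ) φ) * (deriv (fun x => G r φ pr x) pφ)
    - (deriv (fun x => F r φ pr x) pφ) * (deriv (fun x => G r x pr pφ) φ)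

/-- Kinetic Hamiltonian T_n = (1/2) r^(2n) (p_r² + p_φ²/r²) of the
position dependent mass m_n = 1/r^(2n). -/
noncomputable def Tkin (n : ℝ) (r φ pr pφ : ℝ) : ℝ :=
  (1/2) * r ^ (2*n) * (pr^2 + pφ^2 / r^2)

/-- Noether momentum P₁ = rⁿ (p_r cos(k_n φ) + (p_φ/r) sin(k_n φ)), k_n = n − 1. -/
noncomputable def P1 (n : ℝ) (r φ pr pφ : ℝ) : ℝ :=
  r ^ n * (pr * cos ((n-1)*φ) + (pφ / r) * sin ((n-1)*φ))

/-- Noether momentum P₂ = rⁿ (p_r sin(k_n φ) − (p_φ/r) cos(k_n φ)), k_n = n − 1. -/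
noncomputable def P2 (n : ℝ) (r φ pr pφ : ℝ) : ℝ :=
  r ^ n * (pr * sin ((n-1)*φ) - (pφ / r) * cos ((n-1)*φ))

/-! Both integrals have the shape `(rⁿ (p_r a(φ) + (p_φ/r) b(φ)))² + 2 k₀ a(φ)² / r^(2 k_n)`,
with `(a, b) = (cos k_n φ, sin k_n φ)` for `J₁₁` and `(a, b) = (sin k_n φ, -cos k_n φ)` for `J₂₂`.
For any pair `(a, b)` rotating at angular speed `k_n` (`a' = -k_n b`, `b' = k_n a`) the bracket of
the integrals built on `(a, b)` and on `(b, -a)` vanishes: once `rⁿ = r^(n-1) · r` and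
`r^(2 k_n) = (r^(n-1))²` are substituted into the partial derivatives, it is a rational
identity in `r^(n-1)`, `r`, the momenta, `a(φ)` and `b(φ)`. -/

theorem pb_eq_of_hasDerivAt {F G : ℝ → ℝ → ℝ → ℝ → ℝ}
    {r φ pr pφ Fr Fφ Fpr Fpφ Gr Gφ Gpr Gpφ : ℝ}
    (hFr : HasDerivAt (fun x => F x φ pr pφ) Fr r)
    (hFφ : HasDerivAt (fun x => F r x pr pφ) Fφ φ)
    (hFpr : HasDerivAt (fun x => F r φ x pφ) Fpr pr)
    (hFpφ : HasDerivAt (fun x => F r φ pr x) Fpφ pφ)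
    (hGr : HasDerivAt (fun x => G x φ pr pφ) Gr r)
    (hGφ : HasDerivAt (fun x => G r x pr pφ) Gφ φ)
    (hGpr : HasDerivAt (fun x => G r φ x pφ) Gpr pr)
    (hGpφ : HasDerivAt (fun x => G r φ pr x) Gpφ pφ) :
    pb F G r φ pr pφ = Fr * Gpr - Fpr * Gr + Fφ * Gpφ - Fpφ * Gφ := by
  rw [pb, hFr.deriv, hFφ.deriv, hFpr.deriv, hFpφ.deriv, hGr.deriv, hGφ.deriv, hGpr.deriv,
    hGpφ.deriv]

noncomputable def noetherMomentum (n : ℝ) (a b : ℝ → ℝ) (r φ pr pφ : ℝ) : ℝ :=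
  r ^ n * (pr * a φ + pφ / r * b φ)

noncomputable def quadIntegral (n k0 : ℝ) (a b : ℝ → ℝ) (r φ pr pφ : ℝ) : ℝ :=
  noetherMomentum n a b r φ pr pφ ^ 2 + 2 * (k0 / r ^ (2 * (n - 1))) * a φ ^ 2

section quadIntegral

variable {n k0 : ℝ} {a b : ℝ → ℝ} {r φ pr pφ : ℝ}

theorem hasDerivAt_quadIntegral_radius (hr : 0 < r) :
    HasDerivAt (fun x => quadIntegral n k0 a b x φ pr pφ)
      (2 * noetherMomentum n a b r φ pr pφ
          * (n * r ^ (n - 1) * (pr * a φ + pφ / r * b φ) - r ^ n * (pφ / r ^ 2 * b φ))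
        - 4 * (n - 1) * k0 / (r ^ (2 * (n - 1)) * r) * a φ ^ 2) r := by
  have hr0 : r ≠ 0 := hr.ne'
  have hV : r ^ (2 * (n - 1)) ≠ 0 := (Real.rpow_pos_of_pos hr _).ne'
  have hpow (p : ℝ) : HasDerivAt (fun x => x ^ p) (p * r ^ (p - 1)) r :=
    Real.hasDerivAt_rpow_const (Or.inl hr0)
  have h : HasDerivAt (fun x => quadIntegral n k0 a b x φ pr pφ) _ r :=
    (((hpow n).mul ((((hasDerivAt_const r pφ).div (hasDerivAt_id' r) hr0).mul_const
      (b φ)).const_add (pr * a φ))).pow 2).add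
      ((((hasDerivAt_const r k0).div (hpow (2 * (n - 1))) hV).const_mul 2).mul_const (a φ ^ 2))
  refine h.congr_deriv ?_
  simp only [noetherMomentum, Pi.mul_apply, Pi.div_apply, Nat.cast_ofNat, Nat.reduceSub, pow_one]
  rw [Real.rpow_sub_one hr0 (2 * (n - 1))]
  field_simp
  ring

theorem hasDerivAt_quadIntegral_angle {a' b' : ℝ} (ha : HasDerivAt a a' φ)
    (hb : HasDerivAt b b' φ) :
    HasDerivAt (fun x => quadIntegral n k0 a b r x pr pφ)
      (2 * noetherMomentum n a b r φ pr pφ * (r ^ n * (pr * a' + pφ / r * b'))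
        + 2 * (k0 / r ^ (2 * (n - 1))) * (2 * a φ * a')) φ := by
  have h : HasDerivAt (fun x => quadIntegral n k0 a b r x pr pφ) _ φ :=
    ((((ha.const_mul pr).add (hb.const_mul (pφ / r))).const_mul (r ^ n)).pow 2).add
      ((ha.pow 2).const_mul (2 * (k0 / r ^ (2 * (n - 1)))))
  refine h.congr_deriv ?_
  simp only [noetherMomentum, Pi.add_apply, Nat.cast_ofNat, Nat.reduceSub, pow_one]

theorem hasDerivAt_quadIntegral_radialMomentum :
    HasDerivAt (fun x => quadIntegral n k0 a b r φ x pφ)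
      (2 * noetherMomentum n a b r φ pr pφ * (r ^ n * a φ)) pr := by
  have h : HasDerivAt (fun x => quadIntegral n k0 a b r φ x pφ) _ pr :=
    (((((hasDerivAt_id' pr).mul_const (a φ)).add_const (pφ / r * b φ)).const_mul
      (r ^ n)).pow 2).add_const _
  refine h.congr_deriv ?_
  simp only [noetherMomentum, Nat.cast_ofNat, Nat.reduceSub, pow_one]
  ring

theorem hasDerivAt_quadIntegral_angularMomentum :
    HasDerivAt (fun x => quadIntegral n k0 a b r φ pr x)
      (2 * noetherMomentum n a b r φ pr pφ * (r ^ n * (b φ / r))) pφ := by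
  have h : HasDerivAt (fun x => quadIntegral n k0 a b r φ pr x) _ pφ :=
    ((((((hasDerivAt_id' pφ).div_const r).mul_const (b φ)).const_add (pr * a φ)).const_mul
      (r ^ n)).pow 2).add_const _
  refine h.congr_deriv ?_
  simp only [noetherMomentum, Nat.cast_ofNat, Nat.reduceSub, pow_one]
  ring

theorem pb_quadIntegral_rotate_eq_zero (hr : 0 < r)
    (ha : HasDerivAt a (-(n - 1) * b φ) φ) (hb : HasDerivAt b ((n - 1) * a φ) φ) :
    pb (quadIntegral n k0 a b) (quadIntegral n k0 b (-a)) r φ pr pφ = 0 := by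
  rw [pb_eq_of_hasDerivAt (hasDerivAt_quadIntegral_radius hr) (hasDerivAt_quadIntegral_angle ha hb)
    hasDerivAt_quadIntegral_radialMomentum hasDerivAt_quadIntegral_angularMomentum
    (hasDerivAt_quadIntegral_radius hr) (hasDerivAt_quadIntegral_angle hb ha.neg)
    hasDerivAt_quadIntegral_radialMomentum hasDerivAt_quadIntegral_angularMomentum]
  have hr0 : r ≠ 0 := hr.ne'
  have hρ : r ^ (n - 1) ≠ 0 := (Real.rpow_pos_of_pos hr _).ne'
  have hrn : r ^ n = r ^ (n - 1) * r := by rw [← Real.rpow_add_one hr0, sub_add_cancel]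
  have hr2n : r ^ (2 * (n - 1)) = (r ^ (n - 1)) ^ 2 := by
    rw [mul_comm, Real.rpow_mul hr.le, Real.rpow_two]
  simp only [noetherMomentum, Pi.neg_apply, hrn, hr2n]
  field_simp
  ring

end quadIntegral

/-- The quadratic integrals J₁₁ and J₂₂ of H_na = T_n + k₀/r^(2k_n) are in involution
on Ω = {r > 0}. -/
theorem J11_J22_in_involution (n k0 : ℝ) :
    ∀ r φ pr pφ : ℝ, 0 < r →
      pb (fun r φ pr pφ => (P1 n r φ pr pφ)^2
            + 2 * (k0 / r ^ (2*(n-1))) * (cos ((n-1)*φ))^2)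
         (fun r φ pr pφ => (P2 n r φ pr pφ)^2
            + 2 * (k0 / r ^ (2*(n-1))) * (sin ((n-1)*φ))^2) r φ pr pφ = 0 := by
  intro r φ pr pφ hr
  have hlin : HasDerivAt (fun x => (n - 1) * x) (n - 1) φ := by
    simpa using (hasDerivAt_id' φ).const_mul (n - 1)
  have hJ₂₂ : (fun r φ pr pφ => (P2 n r φ pr pφ)^2
      + 2 * (k0 / r ^ (2*(n-1))) * (sin ((n-1)*φ))^2) =
      quadIntegral n k0 (fun x => sin ((n - 1) * x)) (-fun x => cos ((n - 1) * x)) := by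
    funext r φ pr pφ
    simp only [P2, quadIntegral, noetherMomentum, Pi.neg_apply]
    ring
  rw [hJ₂₂]
  exact pb_quadIntegral_rotate_eq_zero hr (hlin.cos.congr_deriv (by ring))
    (hlin.sin.congr_deriv (by ring))
end

section
/- Let n ∈ ℝ, k_n = n − 1, and k₀, k₁, k₂ ∈ ℝ. Consider the Hamiltonian H_na = T_n + U_na with U_na = k₀/r^{2k_n} + r^{2k_n}[k₁/cos²(k_n φ) + k₂/sin²(k_n φ)], defined on the open subset of Ω = {r > 0} where cos(k_n φ) ≠ 0 and sin(k_n φ) ≠ 0. Then the three functions J_a1 = P₁² + 2(k₀/r^{2k_n}) cos²(k_n φ) + 2k₁ r^{2k_n} sec²(k_n φ), J_a2 = P₂² + 2(k₀/r^{2k_n}) sin²(k_n φ) + 2k₂ r^{2k_n} csc²(k_n φ) and J_a3 = p_φ² + 2[k₁/cos²(k_n φ) + k₂/sin²(k_n φ)] are constants of motion: their Poisson brackets with H_na vanish at every point of that open set. -/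
open Real

/-- The oscillator-related Hamiltonian H_na = T_n + U_na,
U_na = k₀/r^(2k_n) + r^(2k_n) [k₁/cos²(k_n φ) + k₂/sin²(k_n φ)]. -/
noncomputable def HnaFull (n k0 k1 k2 : ℝ) (r φ pr pφ : ℝ) : ℝ :=
  Tkin n r φ pr pφ + k0 / r ^ (2*(n-1))
    + r ^ (2*(n-1)) * (k1 / (cos ((n-1)*φ))^2 + k2 / (sin ((n-1)*φ))^2)

/-!
Replace the angular factor of the potential by an arbitrary `W(φ)`, so that
`H = T_n + k₀ r^(-2k_n) + r^(2k_n) W(φ)`. Since `∂H/∂p_φ = r^(2k_n) p_φ` and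
`∂H/∂φ = r^(2k_n) W'(φ)`, the bracket of `p_φ² + 2W` with `H` vanishes for every `W`.

`J_a1` and `J_a2` are both of the form `P² + 2k₀ a²/r^(2k_n) + 2κ r^(2k_n)/a²`, where
`P = rⁿ (p_r a + (p_φ/r) b)` and `(a, b)` is a pair of functions with `a' = -k_n b`,
`b' = k_n a`: `J_a1` comes from `(cos, sin)` with `κ = k₁`, and `J_a2` from `(sin, -cos)`,
which exchanges the roles of `k₁` and `k₂` in `W`. Computing all partial derivatives,
the bracket of such an invariant with `H` collapses to a multiple of `1 - a² - b²`.
-/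

def HasPartialsAt (F : ℝ → ℝ → ℝ → ℝ → ℝ) (r φ pr pφ Fr Fφ Fpr Fpφ : ℝ) : Prop :=
  HasDerivAt (fun x => F x φ pr pφ) Fr r ∧ HasDerivAt (fun x => F r x pr pφ) Fφ φ ∧
    HasDerivAt (fun x => F r φ x pφ) Fpr pr ∧ HasDerivAt (fun x => F r φ pr x) Fpφ pφ

theorem pb_eq_of_hasPartialsAt {F G : ℝ → ℝ → ℝ → ℝ → ℝ}
    {r φ pr pφ Fr Fφ Fpr Fpφ Gr Gφ Gpr Gpφ : ℝ}
    (hF : HasPartialsAt F r φ pr pφ Fr Fφ Fpr Fpφ) (hG : HasPartialsAt G r φ pr pφ Gr Gφ Gpr Gpφ) :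
    pb F G r φ pr pφ = Fr * Gpr - Fpr * Gr + Fφ * Gpφ - Fpφ * Gφ := by
  obtain ⟨hFr, hFφ, hFpr, hFpφ⟩ := hF
  obtain ⟨hGr, hGφ, hGpr, hGpφ⟩ := hG
  rw [pb, hFr.deriv, hFφ.deriv, hFpr.deriv, hFpφ.deriv, hGr.deriv, hGφ.deriv, hGpr.deriv,
    hGpφ.deriv]

namespace HasPartialsAt

variable {F G : ℝ → ℝ → ℝ → ℝ → ℝ} {r φ pr pφ Fr Fφ Fpr Fpφ Gr Gφ Gpr Gpφ : ℝ}

theorem add (hF : HasPartialsAt F r φ pr pφ Fr Fφ Fpr Fpφ)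
    (hG : HasPartialsAt G r φ pr pφ Gr Gφ Gpr Gpφ) :
    HasPartialsAt (fun r φ pr pφ => F r φ pr pφ + G r φ pr pφ) r φ pr pφ
      (Fr + Gr) (Fφ + Gφ) (Fpr + Gpr) (Fpφ + Gpφ) :=
  ⟨hF.1.add hG.1, hF.2.1.add hG.2.1, hF.2.2.1.add hG.2.2.1, hF.2.2.2.add hG.2.2.2⟩

theorem sq (hF : HasPartialsAt F r φ pr pφ Fr Fφ Fpr Fpφ) :
    HasPartialsAt (fun r φ pr pφ => F r φ pr pφ ^ 2) r φ pr pφ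
      (2 * F r φ pr pφ * Fr) (2 * F r φ pr pφ * Fφ) (2 * F r φ pr pφ * Fpr)
      (2 * F r φ pr pφ * Fpφ) :=
  ⟨by simpa using hF.1.fun_pow 2, by simpa using hF.2.1.fun_pow 2,
    by simpa using hF.2.2.1.fun_pow 2, by simpa using hF.2.2.2.fun_pow 2⟩

end HasPartialsAt

theorem hasPartialsAt_radial_mul_angular {f g : ℝ → ℝ} {f' g' r φ : ℝ} (pr pφ : ℝ)
    (hf : HasDerivAt f f' r) (hg : HasDerivAt g g' φ) :
    HasPartialsAt (fun r φ _ _ => f r * g φ) r φ pr pφ (f' * g φ) (f r * g') 0 0 :=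
  ⟨hf.mul_const _, hg.const_mul _, hasDerivAt_const _ _, hasDerivAt_const _ _⟩

section Rpow

variable {r : ℝ}

theorem hasDerivAt_rpow_const_of_pos (hr : 0 < r) (p : ℝ) :
    HasDerivAt (fun x => x ^ p) (p * r ^ p / r) r := by
  simpa [rpow_sub_one hr.ne', mul_div_assoc] using
    hasDerivAt_rpow_const (p := p) (Or.inl hr.ne')

theorem rpow_two_mul_eq_sq (hr : 0 ≤ r) (n : ℝ) : r ^ (2 * n) = (r ^ n) ^ 2 := by
  rw [mul_comm, ← rpow_mul_natCast hr]
  norm_num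

theorem rpow_two_mul_sub_one (hr : 0 < r) (n : ℝ) : r ^ (2 * (n - 1)) = (r ^ n) ^ 2 / r ^ 2 := by
  rw [mul_sub, mul_one, rpow_sub hr, rpow_two_mul_eq_sq hr.le]
  norm_num

end Rpow

/-- `HnaFull n k0 k1 k2` is the case `W φ = k1 / cos² (k_n φ) + k2 / sin² (k_n φ)`. -/
noncomputable def hamiltonianAngular (n k0 : ℝ) (W : ℝ → ℝ) (r φ pr pφ : ℝ) : ℝ :=
  Tkin n r φ pr pφ + k0 / r ^ (2 * (n - 1)) + r ^ (2 * (n - 1)) * W φ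

theorem hasPartialsAt_hamiltonianAngular (n k0 : ℝ) {W : ℝ → ℝ} {r φ W' : ℝ} (pr pφ : ℝ)
    (hr : 0 < r) (hW : HasDerivAt W W' φ) :
    HasPartialsAt (hamiltonianAngular n k0 W) r φ pr pφ
      (n * (r ^ n) ^ 2 * pr ^ 2 / r + (n - 1) * (r ^ n) ^ 2 * pφ ^ 2 / r ^ 3
        - 2 * (n - 1) * k0 * r / (r ^ n) ^ 2 + 2 * (n - 1) * (r ^ n) ^ 2 * W φ / r ^ 3)
      ((r ^ n) ^ 2 / r ^ 2 * W') ((r ^ n) ^ 2 * pr) ((r ^ n) ^ 2 * pφ / r ^ 2) := by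
  simp only [HasPartialsAt, hamiltonianAngular, Tkin]
  refine ⟨?_, ?_, ?_, ?_⟩
  · have hB := hasDerivAt_rpow_const_of_pos hr (2 * (n - 1))
    have h := ((((hasDerivAt_rpow_const_of_pos hr (2 * n)).const_mul (1 / 2)).mul
      (((hasDerivAt_const r (pφ ^ 2)).div (hasDerivAt_pow 2 r) (pow_ne_zero 2 hr.ne')).const_add
        (pr ^ 2))).add ((hasDerivAt_const r k0).div hB (rpow_pos_of_pos hr _).ne')).add
      (hB.mul_const (W φ))
    refine h.congr_deriv ?_
    simp only [Pi.div_apply]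
    rw [rpow_two_mul_eq_sq hr.le, rpow_two_mul_sub_one hr]
    field_simp
    ring
  · refine ((hW.const_mul (r ^ (2 * (n - 1)))).const_add
      (1 / 2 * r ^ (2 * n) * (pr ^ 2 + pφ ^ 2 / r ^ 2) + k0 / r ^ (2 * (n - 1)))).congr_deriv ?_
    rw [rpow_two_mul_sub_one hr]
  · refine (((((hasDerivAt_pow 2 pr).add_const (pφ ^ 2 / r ^ 2)).const_mul
      (1 / 2 * r ^ (2 * n))).add_const (k0 / r ^ (2 * (n - 1)))).add_const
      (r ^ (2 * (n - 1)) * W φ)).congr_deriv ?_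
    rw [rpow_two_mul_eq_sq hr.le]
    ring
  · refine ((((((hasDerivAt_pow 2 pφ).div_const (r ^ 2)).const_add (pr ^ 2)).const_mul
      (1 / 2 * r ^ (2 * n))).add_const (k0 / r ^ (2 * (n - 1)))).add_const
      (r ^ (2 * (n - 1)) * W φ)).congr_deriv ?_
    rw [rpow_two_mul_eq_sq hr.le]
    ring

theorem pb_angularInvariant_hamiltonianAngular (n k0 : ℝ) {W : ℝ → ℝ} {r φ : ℝ} (pr pφ : ℝ)
    (hr : 0 < r) (hW : DifferentiableAt ℝ W φ) :
    pb (fun _ φ _ pφ => pφ ^ 2 + 2 * W φ) (hamiltonianAngular n k0 W) r φ pr pφ = 0 := by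
  have hJ : HasPartialsAt (fun _ φ _ pφ => pφ ^ 2 + 2 * W φ) r φ pr pφ 0 (2 * deriv W φ) 0
      (2 * pφ) :=
    ⟨hasDerivAt_const _ _, (hW.hasDerivAt.const_mul 2).const_add _, hasDerivAt_const _ _,
      by simpa using (hasDerivAt_pow 2 pφ).add_const (2 * W φ)⟩
  rw [pb_eq_of_hasPartialsAt hJ (hasPartialsAt_hamiltonianAngular n k0 pr pφ hr hW.hasDerivAt)]
  ring

theorem hasPartialsAt_noetherMomentum (n : ℝ) {a b : ℝ → ℝ} {r φ : ℝ} (pr pφ : ℝ) (hr : 0 < r)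
    (ha : HasDerivAt a (-(n - 1) * b φ) φ) (hb : HasDerivAt b ((n - 1) * a φ) φ) :
    HasPartialsAt (noetherMomentum n a b) r φ pr pφ
      (r ^ n / r * (n * pr * a φ + (n - 1) * pφ * b φ / r))
      ((n - 1) * r ^ n * (pφ / r * a φ - pr * b φ))
      (r ^ n * a φ) (r ^ n * b φ / r) := by
  simp only [HasPartialsAt, noetherMomentum]
  refine ⟨?_, ?_, ?_, ?_⟩
  · refine ((hasDerivAt_rpow_const_of_pos hr n).mul ((((hasDerivAt_const r pφ).div
      (hasDerivAt_id r) hr.ne').mul_const (b φ)).const_add (pr * a φ))).congr_deriv ?_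
    simp only [Pi.div_apply, id_eq]
    field_simp
    ring
  · refine (((ha.const_mul pr).add (hb.const_mul (pφ / r))).const_mul (r ^ n)).congr_deriv ?_
    ring
  · refine ((((hasDerivAt_id pr).mul_const (a φ)).add_const (pφ / r * b φ)).const_mul
      (r ^ n)).congr_deriv ?_
    ring
  · refine (((((hasDerivAt_id pφ).div_const r).mul_const (b φ)).const_add (pr * a φ)).const_mul
      (r ^ n)).congr_deriv ?_
    field_simp

noncomputable def momentumInvariant (n k0 κ : ℝ) (a b : ℝ → ℝ) (r φ pr pφ : ℝ) : ℝ :=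
  noetherMomentum n a b r φ pr pφ ^ 2 + 2 * (k0 / r ^ (2 * (n - 1))) * a φ ^ 2
    + 2 * κ * r ^ (2 * (n - 1)) * (1 / a φ) ^ 2

theorem pb_momentumInvariant_hamiltonianAngular (n k0 κ κ' : ℝ) {a b : ℝ → ℝ} {r φ : ℝ}
    (pr pφ : ℝ) (hr : 0 < r) (ha : HasDerivAt a (-(n - 1) * b φ) φ)
    (hb : HasDerivAt b ((n - 1) * a φ) φ) (ha0 : a φ ≠ 0) (hb0 : b φ ≠ 0)
    (hab : a φ ^ 2 + b φ ^ 2 = 1) :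
    pb (momentumInvariant n k0 κ a b)
      (hamiltonianAngular n k0 (fun φ => κ / a φ ^ 2 + κ' / b φ ^ 2)) r φ pr pφ = 0 := by
  have hB := hasDerivAt_rpow_const_of_pos hr (2 * (n - 1))
  have hJ : HasPartialsAt (momentumInvariant n k0 κ a b) r φ pr pφ _ _ _ _ :=
    ((hasPartialsAt_noetherMomentum n pr pφ hr ha hb).sq.add
      (hasPartialsAt_radial_mul_angular pr pφ
        (((hasDerivAt_const r k0).div hB (rpow_pos_of_pos hr _).ne').const_mul 2)
        (ha.fun_pow 2))).add
      (hasPartialsAt_radial_mul_angular pr pφ (hB.const_mul (2 * κ))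
        (((hasDerivAt_const φ 1).div ha ha0).fun_pow 2))
  have hW : HasDerivAt (fun φ => κ / a φ ^ 2 + κ' / b φ ^ 2) _ φ :=
    ((hasDerivAt_const φ κ).div (ha.fun_pow 2) (pow_ne_zero 2 ha0)).add
    ((hasDerivAt_const φ κ').div (hb.fun_pow 2) (pow_ne_zero 2 hb0))
  -- The kinetic and `k0` terms cancel identically; only the `κ` term needs `a² + b² = 1`.
  calc pb _ _ r φ pr pφ
      = 4 * (n - 1) * κ * (r ^ n) ^ 3 * noetherMomentum n a b r φ pr pφ
          * (1 - (a φ ^ 2 + b φ ^ 2)) / (r ^ 3 * a φ ^ 3) := by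
        rw [pb_eq_of_hasPartialsAt hJ (hasPartialsAt_hamiltonianAngular n k0 pr pφ hr hW)]
        simp only [Pi.div_apply, Nat.reduceSub, pow_one, noetherMomentum, rpow_two_mul_sub_one hr]
        field_simp
        ring
    _ = 0 := by rw [hab, sub_self, mul_zero, zero_div]

/-- J_a1, J_a2 and J_a3 are constants of motion of H_na on the open subset of
Ω = {r > 0} where cos(k_n φ) ≠ 0 and sin(k_n φ) ≠ 0. -/
theorem HnaFull_superintegrable (n k0 k1 k2 : ℝ) :
    ∀ r φ pr pφ : ℝ, 0 < r → cos ((n-1)*φ) ≠ 0 → sin ((n-1)*φ) ≠ 0 →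
      pb (fun r φ pr pφ => (P1 n r φ pr pφ)^2
            + 2 * (k0 / r ^ (2*(n-1))) * (cos ((n-1)*φ))^2
            + 2 * k1 * r ^ (2*(n-1)) * (1 / cos ((n-1)*φ))^2)
         (HnaFull n k0 k1 k2) r φ pr pφ = 0 ∧
      pb (fun r φ pr pφ => (P2 n r φ pr pφ)^2
            + 2 * (k0 / r ^ (2*(n-1))) * (sin ((n-1)*φ))^2
            + 2 * k2 * r ^ (2*(n-1)) * (1 / sin ((n-1)*φ))^2)
         (HnaFull n k0 k1 k2) r φ pr pφ = 0 ∧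
      pb (fun _ φ _ pφ => pφ^2
            + 2 * (k1 / (cos ((n-1)*φ))^2 + k2 / (sin ((n-1)*φ))^2))
         (HnaFull n k0 k1 k2) r φ pr pφ = 0 := by
  intro r φ pr pφ hr hc hs
  have hcos : HasDerivAt (fun x => cos ((n - 1) * x)) (-(n - 1) * sin ((n - 1) * φ)) φ :=
    ((hasDerivAt_id' φ).const_mul (n - 1)).cos.congr_deriv (by ring)
  have hsin : HasDerivAt (fun x => sin ((n - 1) * x)) ((n - 1) * cos ((n - 1) * φ)) φ :=
    ((hasDerivAt_id' φ).const_mul (n - 1)).sin.congr_deriv (by ring)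
  have hJ2 := pb_momentumInvariant_hamiltonianAngular n k0 k2 k1 pr pφ
    (a := fun x => sin ((n - 1) * x)) (b := fun x => -cos ((n - 1) * x)) hr
    (hsin.congr_deriv (by ring)) (hcos.neg.congr_deriv (by ring)) hs (neg_ne_zero.2 hc)
    (by simp)
  refine ⟨pb_momentumInvariant_hamiltonianAngular n k0 k1 k2 pr pφ hr hcos hsin hc hs
    (cos_sq_add_sin_sq _), ?_, pb_angularInvariant_hamiltonianAngular n k0 pr pφ hr ?_⟩
  · convert hJ2 using 2 <;> funext r φ pr pφ
    · simp only [momentumInvariant, noetherMomentum, P2]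
      ring
    · simp only [HnaFull, hamiltonianAngular]
      ring
  · fun_prop (disch := simp [hc, hs])
end
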